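/- For every m and t, there exists a left-compressed r-uniform hypergraph G on vertex set [t] with m edges such that λ(G) = λ^r_{(m,t)}, the maximum Lagrangian over all r-graphs with m edges and t vertices. -/

import Mathlib

open Finset

/-- The evaluation of the Lagrangian polynomial of a hypergraph with edge set `E`
at a weighting `x`. -/
noncomputable def lagEval {n : ℕ} (E : Finset (Finset (Fin n))) (x : Fin n → ℝ) : ℝ :=
  ∑ e ∈ E, ∏ i ∈ e, x i

/-- A legal weighting: nonnegative entries summing to 1. -/
def IsLegal {n : ℕ} (x : Fin n → ℝ) : Prop :=
  (∀ i, 0 ≤ x i) ∧ ∑ i, x i = 1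

/-- The Lagrangian of a hypergraph: supremum of the Lagrangian polynomial over the simplex. -/
noncomputable def lagrangian {n : ℕ} (E : Finset (Finset (Fin n))) : ℝ :=
  sSup {v | ∃ x, IsLegal x ∧ lagEval E x = v}

/-- `E` is left-compressed: whenever the increasing enumeration of `f` is pointwise at most
that of an edge `e`, `f` is also an edge. -/
def LeftCompressed {n : ℕ} (E : Finset (Finset (Fin n))) : Prop :=
  ∀ e ∈ E, ∀ f : Finset (Fin n),
    List.Forall₂ (· ≤ ·) (f.sort (· ≤ ·)) (e.sort (· ≤ ·)) → f ∈ E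

/-!
Fix an extremal graph `F` and an optimal weighting `x` of it, relabelled so that `x` is
non-increasing. Replacing an edge `e` by a non-edge `f` whose sorted entries are pointwise below
those of `e` gives `∏ i ∈ e, x i ≤ ∏ i ∈ f, x i`, so the Lagrangian polynomial at `x` does not
decrease, while the total label sum `∑ e, ∑ i ∈ e, i` strictly drops. A graph with `m` edges of
size `r` minimising this label sum among those whose polynomial at `x` is at least `λ(F)`
therefore admits no such replacement, i.e. it is left-compressed, and its Lagrangian is `λ(F)`.
-/

namespace List

theorem Forall₂.prod_le_prod_of_nonneg {R : Type*} [CommSemiring R] [PartialOrder R]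
    [IsOrderedRing R] {l₁ l₂ : List R} (h : Forall₂ (· ≤ ·) l₁ l₂) (h₀ : ∀ a ∈ l₁, 0 ≤ a) :
    l₁.prod ≤ l₂.prod := by
  induction h with
  | nil => rfl
  | @cons a b l₁ l₂ hab _ ih =>
    simp only [forall_mem_cons] at h₀
    simpa only [prod_cons] using
      mul_le_mul hab (ih h₀.2) (prod_nonneg h₀.2) (h₀.1.trans hab)

theorem Forall₂.sum_lt_sum_of_ne {M : Type*} [AddCommMonoid M] [PartialOrder M]
    [IsOrderedCancelAddMonoid M] {l₁ l₂ : List M} (h : Forall₂ (· ≤ ·) l₁ l₂) (hne : l₁ ≠ l₂) :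
    l₁.sum < l₂.sum := by
  induction h with
  | nil => exact absurd rfl hne
  | @cons a b l₁ l₂ hab htail ih =>
    simp only [sum_cons]
    rcases hab.lt_or_eq with hab | rfl
    · exact add_lt_add_of_lt_of_le hab htail.sum_le_sum
    · exact add_lt_add_right (ih fun h => hne (h ▸ rfl)) a

end List

namespace Finset

section Sorted

variable {α : Type*} [LinearOrder α] {e f : Finset α}

theorem card_eq_of_forall₂_sort
    (hfe : List.Forall₂ (· ≤ ·) (f.sort (· ≤ ·)) (e.sort (· ≤ ·))) : f.card = e.card := by
  simpa only [length_sort] using hfe.length_eq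

theorem prod_le_prod_of_forall₂_sort {R : Type*} [CommSemiring R] [PartialOrder R]
    [IsOrderedRing R] {x : α → R} (hx₀ : ∀ i, 0 ≤ x i) (hx : Antitone x)
    (hfe : List.Forall₂ (· ≤ ·) (f.sort (· ≤ ·)) (e.sort (· ≤ ·))) :
    ∏ i ∈ e, x i ≤ ∏ i ∈ f, x i := by
  rw [prod_eq_multiset_prod, prod_eq_multiset_prod, ← sort_eq e (· ≤ ·), ← sort_eq f (· ≤ ·),
    Multiset.map_coe, Multiset.map_coe, Multiset.prod_coe, Multiset.prod_coe]
  refine List.Forall₂.prod_le_prod_of_nonneg ?_ (by simp [hx₀])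
  rw [List.forall₂_map_left_iff, List.forall₂_map_right_iff]
  exact hfe.flip.imp fun _ _ h => hx h

theorem sum_lt_sum_of_forall₂_sort {M : Type*} [AddCommMonoid M] [PartialOrder M]
    [IsOrderedCancelAddMonoid M] {g : α → M} (hg : StrictMono g) (hne : f ≠ e)
    (hfe : List.Forall₂ (· ≤ ·) (f.sort (· ≤ ·)) (e.sort (· ≤ ·))) :
    ∑ i ∈ f, g i < ∑ i ∈ e, g i := by
  rw [sum_eq_multiset_sum, sum_eq_multiset_sum, ← sort_eq e (· ≤ ·), ← sort_eq f (· ≤ ·),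
    Multiset.map_coe, Multiset.map_coe, Multiset.sum_coe, Multiset.sum_coe]
  refine List.Forall₂.sum_lt_sum_of_ne ?_ ?_
  · rw [List.forall₂_map_left_iff, List.forall₂_map_right_iff]
    exact hfe.imp fun _ _ h => hg.monotone h
  · rw [Ne, List.map_inj_right hg.injective]
    exact fun h => hne (by simpa using congrArg List.toFinset h)

end Sorted

theorem sum_insert_erase_add {ι M : Type*} [DecidableEq ι] [AddCommMonoid M]
    {s : Finset ι} {a b : ι} (ha : a ∈ s) (hb : b ∉ s) (φ : ι → M) :
    ∑ i ∈ insert b (s.erase a), φ i + φ a = ∑ i ∈ s, φ i + φ b := by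
  rw [sum_insert fun h => hb (mem_of_mem_erase h), ← add_sum_erase s φ ha]
  abel

theorem card_insert_erase {ι : Type*} [DecidableEq ι] {s : Finset ι} {a b : ι} (ha : a ∈ s)
    (hb : b ∉ s) : (insert b (s.erase a)).card = s.card := by
  rw [card_insert_of_notMem fun h => hb (mem_of_mem_erase h), card_erase_add_one ha]

end Finset

section Lagrangian

variable {n : ℕ}

theorem continuous_lagEval (E : Finset (Finset (Fin n))) : Continuous (lagEval E) := by
  unfold lagEval
  fun_prop

theorem lagrangian_eq_sSup_image (E : Finset (Finset (Fin n))) :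
    lagrangian E = sSup (lagEval E '' stdSimplex ℝ (Fin n)) :=
  rfl

theorem isCompact_image_lagEval (E : Finset (Finset (Fin n))) :
    IsCompact (lagEval E '' stdSimplex ℝ (Fin n)) :=
  (isCompact_stdSimplex ℝ (Fin n)).image (continuous_lagEval E)

theorem lagEval_le_lagrangian (E : Finset (Finset (Fin n))) {x : Fin n → ℝ} (hx : IsLegal x) :
    lagEval E x ≤ lagrangian E := by
  rw [lagrangian_eq_sSup_image]
  exact le_csSup (isCompact_image_lagEval E).bddAbove ⟨x, hx, rfl⟩

theorem exists_isLegal_lagEval_eq_lagrangian [Nonempty (Fin n)] (E : Finset (Finset (Fin n))) :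
    ∃ x, IsLegal x ∧ lagEval E x = lagrangian E := by
  rw [lagrangian_eq_sSup_image]
  exact (isCompact_image_lagEval E).sSup_mem
    ⟨_, _, single_mem_stdSimplex ℝ (Classical.arbitrary _), rfl⟩

theorem IsLegal.comp_perm {x : Fin n → ℝ} (hx : IsLegal x) (σ : Equiv.Perm (Fin n)) :
    IsLegal (x ∘ σ) :=
  ⟨fun i => hx.1 (σ i), by simpa only [Function.comp_apply, Equiv.sum_comp] using hx.2⟩

theorem lagEval_map_perm (σ : Equiv.Perm (Fin n)) (E : Finset (Finset (Fin n)))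
    (x : Fin n → ℝ) :
    lagEval (E.map (mapEmbedding σ.toEmbedding).toEmbedding) x = lagEval E (x ∘ σ) := by
  simp [lagEval, prod_map]

end Lagrangian

theorem Tuple.exists_perm_antitone {n : ℕ} {α : Type*} [LinearOrder α] (x : Fin n → α) :
    ∃ σ : Equiv.Perm (Fin n), Antitone (x ∘ σ) :=
  ⟨Tuple.sort (OrderDual.toDual ∘ x), monotone_toDual_comp_iff.mp (Tuple.monotone_sort _)⟩

section Compression

variable {n : ℕ}

def labelSum (E : Finset (Finset (Fin n))) : ℕ :=
  ∑ e ∈ E, ∑ i ∈ e, (i : ℕ)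

variable {E : Finset (Finset (Fin n))} {e f : Finset (Fin n)}

theorem lagEval_le_lagEval_insert_erase {x : Fin n → ℝ} (hx₀ : ∀ i, 0 ≤ x i) (hx : Antitone x)
    (he : e ∈ E) (hf : f ∉ E) (hfe : List.Forall₂ (· ≤ ·) (f.sort (· ≤ ·)) (e.sort (· ≤ ·))) :
    lagEval E x ≤ lagEval (insert f (E.erase e)) x := by
  have hswap := sum_insert_erase_add he hf fun g => ∏ i ∈ g, x i
  have hprod := prod_le_prod_of_forall₂_sort hx₀ hx hfe
  unfold lagEval
  linarith

theorem labelSum_insert_erase_lt (he : e ∈ E) (hf : f ∉ E)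
    (hfe : List.Forall₂ (· ≤ ·) (f.sort (· ≤ ·)) (e.sort (· ≤ ·))) :
    labelSum (insert f (E.erase e)) < labelSum E := by
  have hswap := sum_insert_erase_add he hf fun g => ∑ i ∈ g, (i : ℕ)
  have hsum := sum_lt_sum_of_forall₂_sort Fin.val_strictMono (ne_of_mem_of_not_mem he hf).symm hfe
  unfold labelSum
  omega

theorem exists_leftCompressed_lagEval_ge {r : ℕ} {x : Fin n → ℝ} (hx₀ : ∀ i, 0 ≤ x i)
    (hx : Antitone x) {F : Finset (Finset (Fin n))} (hF : ∀ e ∈ F, e.card = r) :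
    ∃ E : Finset (Finset (Fin n)), (∀ e ∈ E, e.card = r) ∧ E.card = F.card ∧ LeftCompressed E ∧
      lagEval F x ≤ lagEval E x := by
  classical
  set A : Finset (Finset (Finset (Fin n))) :=
    {E | (∀ e ∈ E, e.card = r) ∧ E.card = F.card ∧ lagEval F x ≤ lagEval E x}
  obtain ⟨E, hEA, hmin⟩ :=
    exists_min_image A labelSum ⟨F, mem_filter.2 ⟨mem_univ _, hF, rfl, le_rfl⟩⟩
  obtain ⟨hEr, hEcard, hEx⟩ := (mem_filter.1 hEA).2
  refine ⟨E, hEr, hEcard, fun e he f hfe => ?_, hEx⟩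
  by_contra hf
  have hswap : insert f (E.erase e) ∈ A := by
    refine mem_filter.2 ⟨mem_univ _, ?_, by rw [card_insert_erase he hf, hEcard], ?_⟩
    · simp only [mem_insert]
      rintro g (rfl | hg)
      · rw [card_eq_of_forall₂_sort hfe, hEr e he]
      · exact hEr g (mem_of_mem_erase hg)
    · exact hEx.trans (lagEval_le_lagEval_insert_erase hx₀ hx he hf hfe)
  exact (hmin _ hswap).not_gt (labelSum_insert_erase_lt he hf hfe)

end Compression

theorem exists_leftCompressed_lagrangian_ge {n r : ℕ} {F : Finset (Finset (Fin n))}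
    (hF : ∀ e ∈ F, e.card = r) :
    ∃ E : Finset (Finset (Fin n)), (∀ e ∈ E, e.card = r) ∧ E.card = F.card ∧ LeftCompressed E ∧
      lagrangian F ≤ lagrangian E := by
  rcases isEmpty_or_nonempty (Fin n) with _ | _
  · exact ⟨F, hF, rfl, fun e he f _ => Subsingleton.elim e f ▸ he, le_rfl⟩
  obtain ⟨x, hx, hxF⟩ := exists_isLegal_lagEval_eq_lagrangian F
  obtain ⟨σ, hσ⟩ := Tuple.exists_perm_antitone x
  set F' := F.map (mapEmbedding σ.symm.toEmbedding).toEmbedding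
  have hF'x : lagEval F' (x ∘ σ) = lagrangian F := by
    rw [lagEval_map_perm, ← hxF]
    congr 1
    ext i
    simp
  have hF'r : ∀ e ∈ F', e.card = r := by simpa [F'] using hF
  obtain ⟨E, hEr, hEcard, hEc, hE⟩ :=
    exists_leftCompressed_lagEval_ge (fun i => hx.1 (σ i)) hσ hF'r
  refine ⟨E, hEr, hEcard.trans (card_map _), hEc, ?_⟩
  calc lagrangian F = lagEval F' (x ∘ σ) := hF'x.symm
    _ ≤ lagEval E (x ∘ σ) := hE
    _ ≤ lagrangian E := lagEval_le_lagrangian E (hx.comp_perm σ)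

/-- There is a left-compressed `r`-graph on `[t]` with `m` edges attaining the maximum
Lagrangian `λ^r_{(m,t)}` over all `r`-graphs with `m` edges and `t` vertices. -/
theorem exists_left_compressed_extremal_on_t {m t r : ℕ} (hm : m ≤ t.choose r) :
    ∃ E : Finset (Finset (Fin t)), (∀ e ∈ E, e.card = r) ∧ E.card = m ∧ LeftCompressed E ∧
      lagrangian E = sSup {v | ∃ F : Finset (Finset (Fin t)),
        (∀ e ∈ F, e.card = r) ∧ F.card = m ∧ lagrangian F = v} := by
  set S := {v | ∃ F : Finset (Finset (Fin t)),
    (∀ e ∈ F, e.card = r) ∧ F.card = m ∧ lagrangian F = v}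
  have hS : S.Finite := (Set.finite_range lagrangian).subset fun _ ⟨F, _, _, hF⟩ => ⟨F, hF⟩
  obtain ⟨F₀, hF₀, hF₀m⟩ := exists_subset_card_eq (s := powersetCard r (univ : Finset (Fin t)))
    (by simpa using hm)
  have hS₀ : S.Nonempty := ⟨_, F₀, fun e he => (mem_powersetCard.1 (hF₀ he)).2, hF₀m, rfl⟩
  obtain ⟨F, hFr, hFm, hFmax⟩ := hS₀.csSup_mem hS
  obtain ⟨E, hEr, hEF, hEc, hFE⟩ := exists_leftCompressed_lagrangian_ge hFr
  have hEm : E.card = m := hEF.trans hFm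
  exact ⟨E, hEr, hEm, hEc,
    le_antisymm (le_csSup hS.bddAbove ⟨E, hEr, hEm, rfl⟩) (hFmax ▸ hFE)⟩
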